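/- Let Δ be an obtuse basis of V and let A ⊆ C ⊆ Δ be subsets. (1) There exists a constant c > 0, depending only on V, Δ, A, C, such that for all H, X ∈ V with Γ_A^C(H, X) ≠ 0 one has ‖pr(H)‖ ≤ c‖pr(X)‖, where pr denotes the orthogonal projection onto V_A^C. (2) If X ∈ V satisfies ⟨α, X⟩ > 0 for every α ∈ Δ, then Γ_A^C(H, X) = 1 precisely when ⟨γ_A, H⟩ > 0 for every γ ∈ C∖A and ⟨ϖ_γ, H − X⟩ ≤ 0 for every γ ∈ C∖A (where (ϖ_γ)_{γ ∈ C∖A} is the dual basis Δ̂_A^C), and Γ_A^C(H, X) = 0 otherwise. -/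

import Mathlib

open scoped RealInnerProductSpace Classical

variable {V : Type*} [NormedAddCommGroup V] [InnerProductSpace ℝ V] [FiniteDimensional ℝ V]
  [DecidableEq V]

/-- The orthogonal projection of `γ` onto the orthogonal complement of the span of `A`
(denoted `γ_A`). -/
noncomputable def projPerp (A : Finset V) (γ : V) : V :=
  (Submodule.orthogonalProjectionOnto (Submodule.span ℝ (A : Set V))ᗮ γ : V)

/-- The characteristic function `τ_A^B` : equal to `1` if `⟪γ_A, H⟫ > 0` for every
`γ ∈ B \ A`, and `0` otherwise. -/
noncomputable def tauFn (A B : Finset V) (H : V) : ℝ :=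
  if ∀ γ ∈ B \ A, 0 < ⟪projPerp A γ, H⟫ then 1 else 0

/-- The characteristic function `τ̂_A^B` (relative to a family `ϖ` of dual bases):
equal to `1` if `⟪ϖ A B γ, H⟫ > 0` for every `γ ∈ B \ A`, and `0` otherwise. -/
noncomputable def tauHatFn (ϖ : Finset V → Finset V → V → V) (A B : Finset V) (H : V) : ℝ :=
  if ∀ γ ∈ B \ A, 0 < ⟪ϖ A B γ, H⟫ then 1 else 0

/-- `ϖ` is a family of dual bases: for all `A ⊆ B ⊆ Δ`, the family `(ϖ A B γ)_{γ ∈ B \ A}`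
is the dual basis `Δ̂_A^B` of `Δ_A^B = (γ_A)_{γ ∈ B \ A}` in
`V_A^B = span B ⊓ (span A)ᗮ`. -/
def IsDualFamily (Δ : Finset V) (ϖ : Finset V → Finset V → V → V) : Prop :=
  ∀ A B : Finset V, A ⊆ B → B ⊆ Δ → ∀ γ ∈ B \ A,
    (ϖ A B γ ∈ Submodule.span ℝ (B : Set V) ⊓ (Submodule.span ℝ (A : Set V))ᗮ) ∧
    ∀ δ ∈ B \ A, ⟪ϖ A B γ, projPerp A δ⟫ = if δ = γ then 1 else 0

/-- The function `Γ_A^C(H, X) = ∑_{B : A ⊆ B ⊆ C} (−1)^{|C∖B|} τ_A^B(H) τ̂_B^C(H − X)`. -/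
noncomputable def GammaFn (ϖ : Finset V → Finset V → V → V) (A C : Finset V) (H X : V) : ℝ :=
  ∑ B ∈ Finset.Icc A C, (-1 : ℝ) ^ (C \ B).card * (tauFn A B H * tauHatFn ϖ B C (H - X))

/-!
Expanding `∏_{γ ∈ C∖A} (1[⟪γ_A, H⟫ > 0] - 1[⟪ϖ_γ, H - X⟫ > 0])` gives back `Γ_A^C(H, X)`,
because the dual basis of `Δ_B^C` is the corresponding part of `Δ̂_A^C`. So `Γ ≠ 0` says that for
every `γ` exactly one of `⟪γ_A, H⟫ > 0`, `⟪ϖ_γ, H - X⟫ > 0` holds. Then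
`⟪γ_A, H⟫ ⟪ϖ_γ, H⟫ ≤ ⟪γ_A, H⟫ ⟪ϖ_γ, X⟫`, and summing over `γ` bounds `‖pr H‖²` by a multiple of
`‖pr H‖ ‖pr X‖`.

For (2), Gram–Schmidt steps keep the projected basis `(γ_A)` obtuse and keep `⟪γ_A, X⟫ > 0`.
Write `pr (H - X) = ∑ c_γ γ_A` with `c_γ = ⟪ϖ_γ, H - X⟫`. The part `p` with positive coefficients
satisfies `⟪p, pr (H - X)⟫ ≥ ‖p‖² ≥ 0`, whereas `Γ ≠ 0` forces `⟪γ_A, H - X⟫ < 0` whenever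
`c_γ > 0`. Hence no `c_γ` is positive, and then every `⟪γ_A, H⟫` is.
-/

open Finset Submodule

set_option linter.unusedSectionVars false

section InnerProductSpace

variable {E : Type*} [NormedAddCommGroup E] [InnerProductSpace ℝ E]

lemma inner_orthogonalProjectionOnto_of_mem {K : Submodule ℝ E} [K.HasOrthogonalProjection]
    {w : E} (hw : w ∈ K) (v : E) : ⟪w, (K.orthogonalProjectionOnto v : E)⟫ = ⟪w, v⟫ :=
  inner_orthogonalProjectionOnto_eq_of_mem_left ⟨w, hw⟩ v

theorem eq_sum_inner_smul_of_mem_span {ι : Type*} [DecidableEq ι] {s : Finset ι} {e w : ι → E}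
    (hdual : ∀ i ∈ s, ∀ j ∈ s, ⟪w i, e j⟫ = if j = i then 1 else 0) {y : E}
    (hy : y ∈ span ℝ (e '' s)) : y = ∑ i ∈ s, ⟪w i, y⟫ • e i := by
  obtain ⟨c, rfl⟩ := (mem_span_image_finset_iff_exists_fun' ℝ).1 hy
  refine sum_congr rfl fun i hi => ?_
  simp_rw [inner_sum, real_inner_smul_right]
  rw [sum_congr rfl fun j hj => by rw [hdual i hi j hj]]
  simp [hi]

theorem exists_pos_coeff_inner_sum_nonneg {ι : Type*} {s : Finset ι} {e : ι → E}
    (he : ∀ i ∈ s, ∀ j ∈ s, i ≠ j → ⟪e i, e j⟫ ≤ 0) {c : ι → ℝ} (hc : ∃ i ∈ s, 0 < c i) :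
    ∃ i ∈ s, 0 < c i ∧ 0 ≤ ⟪e i, ∑ j ∈ s, c j • e j⟫ := by
  set p := ∑ i ∈ s with 0 < c i, c i • e i
  set z := ∑ j ∈ s with ¬ 0 < c j, c j • e j
  have hpz : 0 ≤ ⟪p, z⟫ := by
    rw [sum_inner]
    refine sum_nonneg fun i hi => ?_
    rw [inner_sum]
    refine sum_nonneg fun j hj => ?_
    rw [mem_filter] at hi hj
    rw [real_inner_smul_left, real_inner_smul_right]
    have hij : i ≠ j := by rintro rfl; exact hj.2 hi.2
    exact mul_nonneg hi.2.le
      (mul_nonneg_of_nonpos_of_nonpos (not_lt.1 hj.2) (he i hi.1 j hj.1 hij))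
  by_contra! hneg
  have hp : ⟪p, ∑ j ∈ s, c j • e j⟫ < 0 := by
    rw [sum_inner]
    obtain ⟨i, hi, hci⟩ := hc
    refine sum_neg (fun i hi => ?_) ⟨i, mem_filter.2 ⟨hi, hci⟩⟩
    rw [mem_filter] at hi
    rw [real_inner_smul_left]
    exact mul_neg_of_pos_of_neg hi.2 (hneg i hi.1 hi.2)
  rw [← sum_filter_add_sum_filter_not s (0 < c ·), inner_add_right] at hp
  linarith [real_inner_self_nonneg (x := p)]

end InnerProductSpace

lemma ite_sub_ite_ne_zero_iff {p q : Prop} [Decidable p] [Decidable q] :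
    ((if p then 1 else 0 : ℝ) - if q then 1 else 0) ≠ 0 ↔ Xor p q := by
  by_cases p <;> by_cases q <;> simp [*]

lemma mul_le_mul_of_xor_pos {a b x : ℝ} (h : Xor (0 < a) (0 < b - x)) : a * b ≤ a * x := by
  rcases h with ⟨ha, hb⟩ | ⟨hb, ha⟩ <;> nlinarith

noncomputable abbrev relativeSpan (A C : Finset V) : Submodule ℝ V :=
  span ℝ (C : Set V) ⊓ (span ℝ (A : Set V))ᗮ

section projPerp

lemma projPerp_mem_orthogonal (A : Finset V) (γ : V) :
    projPerp A γ ∈ (span ℝ (A : Set V))ᗮ :=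
  (orthogonalProjectionOnto _ γ).2

lemma sub_projPerp_mem_span (A : Finset V) (γ : V) : γ - projPerp A γ ∈ span ℝ (A : Set V) := by
  simp [projPerp]

@[simp]
lemma projPerp_empty (γ : V) : projPerp ∅ γ = γ := by
  simp [projPerp, starProjection_top]

variable {A : Finset V}

lemma inner_projPerp_of_mem_orthogonal {w : V} (hw : w ∈ (span ℝ (A : Set V))ᗮ) (γ : V) :
    ⟪w, projPerp A γ⟫ = ⟪w, γ⟫ :=
  inner_orthogonalProjectionOnto_of_mem hw γ

lemma projPerp_eq_zero_of_mem {γ : V} (hγ : γ ∈ span ℝ (A : Set V)) : projPerp A γ = 0 := by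
  simp [projPerp, starProjection_eq_self_iff.2 hγ]

lemma projPerp_mem_of_span_le {K : Submodule ℝ V} (hAK : span ℝ (A : Set V) ≤ K) {γ : V}
    (hγ : γ ∈ K) : projPerp A γ ∈ K := by
  simpa using K.sub_mem hγ (hAK (sub_projPerp_mem_span A γ))

lemma projPerp_eq_of_mem_orthogonal {γ v : V} (hv : v ∈ (span ℝ (A : Set V))ᗮ)
    (hγv : γ - v ∈ span ℝ (A : Set V)) : projPerp A γ = v :=
  eq_starProjection_of_mem_orthogonal hv (by rwa [orthogonal_orthogonal])

lemma projPerp_mem_relativeSpan {C : Finset V} (hAC : A ⊆ C) {γ : V} (hγ : γ ∈ C) :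
    projPerp A γ ∈ relativeSpan A C :=
  ⟨projPerp_mem_of_span_le (span_mono (by simpa using hAC)) (subset_span hγ),
    projPerp_mem_orthogonal A γ⟩

/-- One Gram–Schmidt step. When `α_A = 0` the coefficient is `0 / 0 = 0`, and indeed
`insert α A` then spans the same space as `A`. -/
lemma projPerp_insert (α γ : V) :
    projPerp (insert α A) γ = projPerp A γ -
      (⟪projPerp A γ, projPerp A α⟫ / ⟪projPerp A α, projPerp A α⟫) • projPerp A α := by
  set a := projPerp A α
  set g := projPerp A γ
  set c := ⟪g, a⟫ / ⟪a, a⟫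
  have ha : a ∈ (span ℝ (A : Set V))ᗮ := projPerp_mem_orthogonal A α
  have hv : g - c • a ∈ (span ℝ (A : Set V))ᗮ :=
    sub_mem (projPerp_mem_orthogonal A γ) (smul_mem _ c ha)
  have hαv : ⟪α, g - c • a⟫ = 0 := by
    rw [real_inner_comm, ← inner_projPerp_of_mem_orthogonal hv, inner_sub_left,
      real_inner_smul_left]
    change ⟪g, a⟫ - c * ⟪a, a⟫ = 0
    rcases eq_or_ne a 0 with h | h
    · simp [h]
    · rw [div_mul_cancel₀ _ (inner_self_ne_zero.2 h), sub_self]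
  have hle : span ℝ (A : Set V) ≤ span ℝ ((insert α A : Finset V) : Set V) :=
    span_mono (by simp)
  refine projPerp_eq_of_mem_orthogonal ?_ ?_
  · rw [coe_insert, span_insert, ← inf_orthogonal]
    exact ⟨mem_orthogonal_singleton_iff_inner_right.2 hαv, hv⟩
  · rw [sub_sub_eq_add_sub, add_sub_right_comm]
    exact add_mem (hle (sub_projPerp_mem_span A γ))
      (smul_mem _ c (projPerp_mem_of_span_le hle (subset_span (mem_insert_self α A))))

end projPerp

theorem inner_projPerp_nonpos {Δ : Finset V} (hobtuse : ∀ α ∈ Δ, ∀ β ∈ Δ, α ≠ β → ⟪α, β⟫ ≤ 0)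
    {A : Finset V} (hA : A ⊆ Δ) {γ δ : V} (hγ : γ ∈ Δ) (hδ : δ ∈ Δ) (hγδ : γ ≠ δ) :
    ⟪projPerp A γ, projPerp A δ⟫ ≤ 0 := by
  induction A using Finset.induction_on generalizing γ δ with
  | empty => simpa using hobtuse γ hγ δ hδ hγδ
  | insert α A _ ih =>
    have hA' : A ⊆ Δ := (subset_insert α A).trans hA
    have hα : α ∈ Δ := hA (mem_insert_self α A)
    have hα0 : projPerp (insert α A) α = 0 :=
      projPerp_eq_zero_of_mem (subset_span (mem_insert_self α A))
    obtain rfl | hγα := eq_or_ne γ α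
    · simp [hα0]
    obtain rfl | hδα := eq_or_ne δ α
    · simp [hα0]
    rw [inner_projPerp_of_mem_orthogonal (projPerp_mem_orthogonal _ γ), projPerp_insert,
      inner_sub_left, real_inner_smul_left,
      ← inner_projPerp_of_mem_orthogonal (projPerp_mem_orthogonal A γ) δ,
      ← inner_projPerp_of_mem_orthogonal (projPerp_mem_orthogonal A α) δ]
    have hstep : 0 ≤ ⟪projPerp A γ, projPerp A α⟫ / ⟪projPerp A α, projPerp A α⟫ *
        ⟪projPerp A α, projPerp A δ⟫ :=
      mul_nonneg_of_nonpos_of_nonpos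
        (div_nonpos_of_nonpos_of_nonneg (ih hA' hγ hα hγα) real_inner_self_nonneg)
        (ih hA' hα hδ hδα.symm)
    linarith [ih hA' hγ hδ hγδ]

theorem inner_projPerp_pos {Δ : Finset V} (hobtuse : ∀ α ∈ Δ, ∀ β ∈ Δ, α ≠ β → ⟪α, β⟫ ≤ 0)
    {X : V} (hX : ∀ α ∈ Δ, 0 < ⟪α, X⟫) {A : Finset V} (hA : A ⊆ Δ) {γ : V} (hγ : γ ∈ Δ)
    (hγA : γ ∉ A) : 0 < ⟪projPerp A γ, X⟫ := by
  induction A using Finset.induction_on generalizing γ with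
  | empty => simpa using hX γ hγ
  | insert α A hαA ih =>
    have hA' : A ⊆ Δ := (subset_insert α A).trans hA
    have hα : α ∈ Δ := hA (mem_insert_self α A)
    rw [mem_insert, not_or] at hγA
    rw [projPerp_insert, inner_sub_left, real_inner_smul_left]
    have hstep : ⟪projPerp A γ, projPerp A α⟫ / ⟪projPerp A α, projPerp A α⟫ *
        ⟪projPerp A α, X⟫ ≤ 0 :=
      mul_nonpos_of_nonpos_of_nonneg
        (div_nonpos_of_nonpos_of_nonneg (inner_projPerp_nonpos hobtuse hA' hγ hα hγA.1)
          real_inner_self_nonneg)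
        (ih hA' hα hαA).le
    linarith [ih hA' hγ hγA.2]

lemma relativeSpan_le_span_projPerp (A C : Finset V) :
    relativeSpan A C ≤ span ℝ (projPerp A '' ↑(C \ A)) := by
  rintro w ⟨hwC, hwA⟩
  let P : V →ₗ[ℝ] V := (span ℝ (A : Set V))ᗮ.starProjection
  have hPw : P w = w := starProjection_eq_self_iff.2 hwA
  have hw : P w ∈ (span ℝ (C : Set V)).map P := mem_map_of_mem hwC
  rw [hPw, map_span] at hw
  refine span_le.2 ?_ hw
  rintro _ ⟨δ, hδ, rfl⟩
  by_cases hδA : δ ∈ A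
  · simp [P, starProjection_eq_self_iff.2 (subset_span hδA : δ ∈ span ℝ (A : Set V))]
  · exact subset_span ⟨δ, by simp [hδ, hδA], rfl⟩

namespace IsDualFamily

variable {Δ : Finset V} {ϖ : Finset V → Finset V → V → V} {A C : Finset V}

theorem eq_sum_inner_smul_projPerp (hϖ : IsDualFamily Δ ϖ) (hAC : A ⊆ C) (hCΔ : C ⊆ Δ) {y : V}
    (hy : y ∈ relativeSpan A C) : y = ∑ δ ∈ C \ A, ⟪ϖ A C δ, y⟫ • projPerp A δ :=
  eq_sum_inner_smul_of_mem_span (fun γ hγ δ hδ => (hϖ A C hAC hCΔ γ hγ).2 δ hδ)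
    (relativeSpan_le_span_projPerp A C hy)

theorem inner_self_eq_sum (hϖ : IsDualFamily Δ ϖ) (hAC : A ⊆ C) (hCΔ : C ⊆ Δ) {y : V}
    (hy : y ∈ relativeSpan A C) :
    ⟪y, y⟫ = ∑ δ ∈ C \ A, ⟪ϖ A C δ, y⟫ * ⟪projPerp A δ, y⟫ := by
  nth_rw 1 [hϖ.eq_sum_inner_smul_projPerp hAC hCΔ hy]
  simp_rw [sum_inner, real_inner_smul_left]

theorem apply_eq_of_subset (hϖ : IsDualFamily Δ ϖ) {B : Finset V} (hAB : A ⊆ B) (hBC : B ⊆ C)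
    (hCΔ : C ⊆ Δ) {γ : V} (hγ : γ ∈ C \ B) : ϖ B C γ = ϖ A C γ := by
  obtain ⟨⟨hB_mem, hB_perp⟩, hB_dual⟩ := hϖ B C hBC hCΔ γ hγ
  obtain ⟨hA_mem, hA_dual⟩ := hϖ A C (hAB.trans hBC) hCΔ γ (sdiff_subset_sdiff subset_rfl hAB hγ)
  have hB_perpA : ϖ B C γ ∈ (span ℝ (A : Set V))ᗮ :=
    orthogonal_le (span_mono (by simpa using hAB)) hB_perp
  have hinner : ∀ δ ∈ C \ A, ⟪projPerp A δ, ϖ B C γ - ϖ A C γ⟫ = 0 := by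
    intro δ hδ
    rw [real_inner_comm, inner_sub_left, hA_dual δ hδ, inner_projPerp_of_mem_orthogonal hB_perpA]
    by_cases hδB : δ ∈ B
    · rw [inner_left_of_mem_orthogonal (subset_span hδB) hB_perp,
        if_neg (ne_of_mem_of_not_mem hδB (mem_sdiff.1 hγ).2), sub_self]
    · rw [← inner_projPerp_of_mem_orthogonal hB_perp,
        hB_dual δ (mem_sdiff.2 ⟨(mem_sdiff.1 hδ).1, hδB⟩), sub_self]
  rw [← sub_eq_zero, ← inner_self_eq_zero (𝕜 := ℝ),
    hϖ.inner_self_eq_sum (hAB.trans hBC) hCΔ (sub_mem ⟨hB_mem, hB_perpA⟩ hA_mem)]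
  exact sum_eq_zero fun δ hδ => by rw [hinner δ hδ, mul_zero]

theorem gammaFn_eq_prod (hϖ : IsDualFamily Δ ϖ) (hAC : A ⊆ C) (hCΔ : C ⊆ Δ) (H X : V) :
    GammaFn ϖ A C H X = ∏ γ ∈ C \ A,
      ((if 0 < ⟪projPerp A γ, H⟫ then 1 else 0) - if 0 < ⟪ϖ A C γ, H - X⟫ then 1 else 0) := by
  rw [prod_sub, GammaFn]
  refine sum_nbij' (C \ ·) (C \ ·) ?_ ?_ ?_ ?_ ?_
  · intro B hB
    simpa using sdiff_subset_sdiff subset_rfl (mem_Icc.1 hB).1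
  · intro t ht
    rw [mem_powerset] at ht
    exact mem_Icc.2 ⟨subset_sdiff.2 ⟨hAC, disjoint_sdiff.mono_right ht⟩, sdiff_subset⟩
  · intro B hB
    exact Finset.sdiff_sdiff_eq_self (mem_Icc.1 hB).2
  · intro t ht
    exact Finset.sdiff_sdiff_eq_self ((mem_powerset.1 ht).trans sdiff_subset)
  · intro B hB
    obtain ⟨hAB, hBC⟩ := mem_Icc.1 hB
    have hτ : ∏ γ ∈ C \ B, (if 0 < ⟪ϖ B C γ, H - X⟫ then 1 else 0 : ℝ) =
        ∏ γ ∈ C \ B, if 0 < ⟪ϖ A C γ, H - X⟫ then 1 else 0 :=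
      prod_congr rfl fun γ hγ => by rw [hϖ.apply_eq_of_subset hAB hBC hCΔ hγ]
    rw [sdiff_sdiff_sdiff_cancel_left hBC, tauFn, tauHatFn, ← prod_boole, ← prod_boole, hτ]
    ring

theorem gammaFn_ne_zero_iff (hϖ : IsDualFamily Δ ϖ) (hAC : A ⊆ C) (hCΔ : C ⊆ Δ) {H X : V} :
    GammaFn ϖ A C H X ≠ 0 ↔
      ∀ γ ∈ C \ A, Xor (0 < ⟪projPerp A γ, H⟫) (0 < ⟪ϖ A C γ, H - X⟫) := by
  simp only [hϖ.gammaFn_eq_prod hAC hCΔ, prod_ne_zero_iff, ite_sub_ite_ne_zero_iff]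

theorem exists_norm_orthogonalProjectionOnto_le (hϖ : IsDualFamily Δ ϖ) (hAC : A ⊆ C)
    (hCΔ : C ⊆ Δ) :
    ∃ c : ℝ, 0 < c ∧ ∀ H X : V, GammaFn ϖ A C H X ≠ 0 →
      ‖((relativeSpan A C).orthogonalProjectionOnto H : V)‖ ≤
        c * ‖((relativeSpan A C).orthogonalProjectionOnto X : V)‖ := by
  set S := ∑ γ ∈ C \ A, ‖ϖ A C γ‖ * ‖projPerp A γ‖
  have hS : 0 ≤ S := sum_nonneg fun _ _ => by positivity
  refine ⟨S + 1, by linarith, fun H X hΓ => ?_⟩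
  rw [hϖ.gammaFn_ne_zero_iff hAC hCΔ] at hΓ
  set yH : V := ((relativeSpan A C).orthogonalProjectionOnto H : V)
  set yX : V := ((relativeSpan A C).orthogonalProjectionOnto X : V)
  have hϖ_mem γ (hγ : γ ∈ C \ A) : ϖ A C γ ∈ relativeSpan A C := (hϖ A C hAC hCΔ γ hγ).1
  have he_mem γ (hγ : γ ∈ C \ A) : projPerp A γ ∈ relativeSpan A C :=
    projPerp_mem_relativeSpan hAC (mem_sdiff.1 hγ).1
  have key : ‖yH‖ * ‖yH‖ ≤ S * (‖yH‖ * ‖yX‖) := calc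
    ‖yH‖ * ‖yH‖ = ∑ γ ∈ C \ A, ⟪projPerp A γ, H⟫ * ⟪ϖ A C γ, H⟫ := by
      rw [← real_inner_self_eq_norm_mul_norm, hϖ.inner_self_eq_sum hAC hCΔ (coe_mem _)]
      refine sum_congr rfl fun γ hγ => ?_
      rw [inner_orthogonalProjectionOnto_of_mem (hϖ_mem γ hγ),
        inner_orthogonalProjectionOnto_of_mem (he_mem γ hγ), mul_comm]
    _ ≤ ∑ γ ∈ C \ A, ⟪projPerp A γ, yH⟫ * ⟪ϖ A C γ, yX⟫ := by
      refine sum_le_sum fun γ hγ => ?_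
      rw [inner_orthogonalProjectionOnto_of_mem (hϖ_mem γ hγ),
        inner_orthogonalProjectionOnto_of_mem (he_mem γ hγ)]
      exact mul_le_mul_of_xor_pos (by simpa only [inner_sub_right] using hΓ γ hγ)
    _ ≤ ∑ γ ∈ C \ A, ‖ϖ A C γ‖ * ‖projPerp A γ‖ * (‖yH‖ * ‖yX‖) := by
      refine sum_le_sum fun γ _ => ?_
      calc ⟪projPerp A γ, yH⟫ * ⟪ϖ A C γ, yX⟫
          ≤ ‖projPerp A γ‖ * ‖yH‖ * (‖ϖ A C γ‖ * ‖yX‖) :=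
            (le_abs_self _).trans <| by
              rw [abs_mul]
              exact mul_le_mul (abs_real_inner_le_norm _ _) (abs_real_inner_le_norm _ _)
                (abs_nonneg _) (by positivity)
        _ = ‖ϖ A C γ‖ * ‖projPerp A γ‖ * (‖yH‖ * ‖yX‖) := by ring
    _ = S * (‖yH‖ * ‖yX‖) := by rw [sum_mul]
  rcases (norm_nonneg yH).eq_or_lt with h | h
  · rw [← h]
    positivity
  · nlinarith [norm_nonneg yX]

theorem gammaFn_eq_ite (hϖ : IsDualFamily Δ ϖ) (hobtuse : ∀ α ∈ Δ, ∀ β ∈ Δ, α ≠ β → ⟪α, β⟫ ≤ 0)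
    (hAC : A ⊆ C) (hCΔ : C ⊆ Δ) {X : V} (hX : ∀ α ∈ Δ, 0 < ⟪α, X⟫) (H : V) :
    GammaFn ϖ A C H X =
      if (∀ γ ∈ C \ A, 0 < ⟪projPerp A γ, H⟫) ∧ (∀ γ ∈ C \ A, ⟪ϖ A C γ, H - X⟫ ≤ 0)
      then 1 else 0 := by
  split_ifs with h
  · rw [hϖ.gammaFn_eq_prod hAC hCΔ]
    exact prod_eq_one fun γ hγ => by simp [h.1 γ hγ, h.2 γ hγ]
  by_contra hΓ
  replace hΓ := (hϖ.gammaFn_ne_zero_iff hAC hCΔ).1 hΓ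
  suffices hq : ∀ γ ∈ C \ A, ¬ 0 < ⟪ϖ A C γ, H - X⟫ by
    refine h ⟨fun γ hγ => ?_, fun γ hγ => not_lt.1 (hq γ hγ)⟩
    exact (xor_iff_iff_not.1 (hΓ γ hγ)).2 (hq γ hγ)
  set y : V := ((relativeSpan A C).orthogonalProjectionOnto (H - X) : V)
  have hy : y = ∑ δ ∈ C \ A, ⟪ϖ A C δ, H - X⟫ • projPerp A δ := by
    refine (hϖ.eq_sum_inner_smul_projPerp hAC hCΔ (coe_mem _)).trans ?_
    exact sum_congr rfl fun δ hδ => by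
      rw [inner_orthogonalProjectionOnto_of_mem (hϖ A C hAC hCΔ δ hδ).1]
  by_contra! hpos
  obtain ⟨γ, hγ, hqγ, hγy⟩ := exists_pos_coeff_inner_sum_nonneg
    (fun γ hγ δ hδ hγδ => inner_projPerp_nonpos hobtuse (hAC.trans hCΔ)
      (hCΔ (mem_sdiff.1 hγ).1) (hCΔ (mem_sdiff.1 hδ).1) hγδ) hpos
  have hpγ : ⟪projPerp A γ, H⟫ ≤ 0 :=
    not_lt.1 fun hp => (xor_iff_iff_not.1 (hΓ γ hγ)).1 hp hqγ
  obtain ⟨hγC, hγA⟩ := mem_sdiff.1 hγ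
  have hXγ : 0 < ⟪projPerp A γ, X⟫ :=
    inner_projPerp_pos hobtuse hX (hAC.trans hCΔ) (hCΔ hγC) hγA
  rw [← hy, inner_orthogonalProjectionOnto_of_mem (projPerp_mem_relativeSpan hAC hγC),
    inner_sub_right] at hγy
  linarith

end IsDualFamily

theorem stmt_10_general
    (Δ : Finset V)
    (hobtuse : ∀ α ∈ Δ, ∀ β ∈ Δ, α ≠ β → ⟪α, β⟫ ≤ 0)
    (ϖ : Finset V → Finset V → V → V) (hϖ : IsDualFamily Δ ϖ)
    (A C : Finset V) (hAC : A ⊆ C) (hCΔ : C ⊆ Δ) :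
    (∃ c : ℝ, 0 < c ∧ ∀ H X : V, GammaFn ϖ A C H X ≠ 0 →
      ‖(Submodule.orthogonalProjectionOnto
          (Submodule.span ℝ (C : Set V) ⊓ (Submodule.span ℝ (A : Set V))ᗮ) H : V)‖ ≤
        c * ‖(Submodule.orthogonalProjectionOnto
          (Submodule.span ℝ (C : Set V) ⊓ (Submodule.span ℝ (A : Set V))ᗮ) X : V)‖) ∧
    (∀ X : V, (∀ α ∈ Δ, 0 < ⟪α, X⟫) → ∀ H : V,
      GammaFn ϖ A C H X =
        if (∀ γ ∈ C \ A, 0 < ⟪projPerp A γ, H⟫) ∧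
            (∀ γ ∈ C \ A, ⟪ϖ A C γ, H - X⟫ ≤ 0)
        then 1 else 0) :=
  ⟨hϖ.exists_norm_orthogonalProjectionOnto_le hAC hCΔ,
    fun _ hX H => hϖ.gammaFn_eq_ite hobtuse hAC hCΔ hX H⟩

/-- (1) There is `c > 0` such that `Γ_A^C(H,X) ≠ 0` implies
`‖pr H‖ ≤ c ‖pr X‖` (`pr` the orthogonal projection onto `V_A^C`); (2) if `⟪α, X⟫ > 0` for
all `α ∈ Δ`, then `Γ_A^C(H, X)` is the characteristic function of the set of `H` with
`⟪γ_A, H⟫ > 0` and `⟪ϖ_γ, H − X⟫ ≤ 0` for all `γ ∈ C∖A`. -/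
theorem stmt_10
    (Δ : Finset V)
    (hli : LinearIndependent ℝ ((↑) : ↥(Δ : Set V) → V))
    (hspan : Submodule.span ℝ (Δ : Set V) = ⊤)
    (hobtuse : ∀ α ∈ Δ, ∀ β ∈ Δ, α ≠ β → ⟪α, β⟫ ≤ 0)
    (ϖ : Finset V → Finset V → V → V) (hϖ : IsDualFamily Δ ϖ)
    (A C : Finset V) (hAC : A ⊆ C) (hCΔ : C ⊆ Δ) :
    (∃ c : ℝ, 0 < c ∧ ∀ H X : V, GammaFn ϖ A C H X ≠ 0 →
      ‖(Submodule.orthogonalProjectionOnto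
          (Submodule.span ℝ (C : Set V) ⊓ (Submodule.span ℝ (A : Set V))ᗮ) H : V)‖ ≤
        c * ‖(Submodule.orthogonalProjectionOnto
          (Submodule.span ℝ (C : Set V) ⊓ (Submodule.span ℝ (A : Set V))ᗮ) X : V)‖) ∧
    (∀ X : V, (∀ α ∈ Δ, 0 < ⟪α, X⟫) → ∀ H : V,
      GammaFn ϖ A C H X =
        if (∀ γ ∈ C \ A, 0 < ⟪projPerp A γ, H⟫) ∧
            (∀ γ ∈ C \ A, ⟪ϖ A C γ, H - X⟫ ≤ 0)
        then 1 else 0) :=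
  stmt_10_general Δ hobtuse ϖ hϖ A C hAC hCΔ
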